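/- Let α₁, α₀, α₋₁ ∈ ℝ^K and α̃₁, α̃₀, α̃₋₁ ∈ ℝ^K be two linearly independent triples of vectors. If α₁ α₋₁ᵀ = α̃₁ α̃₋₁ᵀ and α₁ α₀ᵀ + α₀ α₋₁ᵀ = α̃₁ α̃₀ᵀ + α̃₀ α̃₋₁ᵀ, then there exists ε ∈ {−1, 1} such that α̃ᵢ = ε αᵢ for each i ∈ {−1, 0, 1}. (This is the identification of the loading vectors in model (M) in the case ρ = 0, where C₁ = σ²(α₁α₀ᵀ + α₀α₋₁ᵀ) and C₂ = σ²α₁α₋₁ᵀ.) -/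

import Mathlib

/-!
The rank-one identity forces `β₁ = s α₁` and `β₋₁ = t α₋₁` with `s t = 1`. Substituting into the
second identity gives `α₁ (α₀ - s β₀)ᵀ = (t β₀ - α₀) α₋₁ᵀ`, so `α₀ - s β₀ = p α₋₁` and
`t β₀ - α₀ = q α₁`. Eliminating `β₀` yields `(1 - s²) α₀ - s² q α₁ - p α₋₁ = 0`; independence of
the `α`'s gives `s² = 1` and `p = 0`, that is `t = s` and `β₀ = s α₀`.
-/

open Matrix

lemma LinearIndependent.eq_zero_of_triple {R M : Type*} [Ring R] [AddCommGroup M] [Module R M]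
    {x y z : M} (h : LinearIndependent R ![x, y, z]) {r s t : R}
    (h' : r • x + s • y + t • z = 0) : r = 0 ∧ s = 0 ∧ t = 0 := by
  have := Fintype.linearIndependent_iff.mp h ![r, s, t] (by simpa [Fin.sum_univ_three] using h')
  exact ⟨this 0, this 1, this 2⟩

section RankOne

variable {𝕜 m n : Type*} [Field 𝕜] {a c : m → 𝕜} {b d : n → 𝕜}

lemma exists_smul_eq_left_of_vecMulVec_eq (h : vecMulVec a b = vecMulVec c d) (hd : d ≠ 0) :
    ∃ s : 𝕜, c = s • a := by
  obtain ⟨j, hj⟩ := Function.ne_iff.mp hd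
  refine ⟨b j / d j, funext fun i => ?_⟩
  have hij : a i * b j = c i * d j := congr($h i j)
  rw [Pi.smul_apply, smul_eq_mul, div_mul_eq_mul_div, eq_div_iff hj]
  linear_combination -hij

lemma exists_smul_eq_right_of_vecMulVec_eq (h : vecMulVec a b = vecMulVec c d) (hc : c ≠ 0) :
    ∃ t : 𝕜, d = t • b := by
  have hT : vecMulVec b a = vecMulVec d c := by
    simpa only [transpose_vecMulVec] using congr($hᵀ)
  exact exists_smul_eq_left_of_vecMulVec_eq hT hc

lemma exists_smul_smul_of_vecMulVec_eq (h : vecMulVec a b = vecMulVec c d) (ha : a ≠ 0)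
    (hb : b ≠ 0) : ∃ s t : 𝕜, s * t = 1 ∧ c = s • a ∧ d = t • b := by
  obtain ⟨i, hi⟩ := Function.ne_iff.mp ha
  obtain ⟨j, hj⟩ := Function.ne_iff.mp hb
  have hij : a i * b j = c i * d j := congr($h i j)
  have hcd : c i * d j ≠ 0 := hij ▸ mul_ne_zero hi hj
  obtain ⟨s, rfl⟩ := exists_smul_eq_left_of_vecMulVec_eq h fun hd => hcd (by simp [hd])
  obtain ⟨t, rfl⟩ := exists_smul_eq_right_of_vecMulVec_eq h fun hc => hcd (by rw [hc]; simp)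
  refine ⟨s, t, ?_, rfl, rfl⟩
  have : (s * t - 1) * (a i * b j) = 0 := by
    simp only [Pi.smul_apply, smul_eq_mul] at hij
    linear_combination -hij
  exact sub_eq_zero.mp ((mul_eq_zero.mp this).resolve_right (mul_ne_zero hi hj))

end RankOne

theorem stmt_6_general {K : ℕ}
    (α1 α0 αm1 β1 β0 βm1 : Fin K → ℝ)
    (hli : LinearIndependent ℝ ![α1, α0, αm1])
    (h2 : vecMulVec α1 αm1 = vecMulVec β1 βm1)
    (h1 : vecMulVec α1 α0 + vecMulVec α0 αm1 = vecMulVec β1 β0 + vecMulVec β0 βm1) :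
    ∃ ε : ℝ, (ε = 1 ∨ ε = -1) ∧ β1 = ε • α1 ∧ β0 = ε • α0 ∧ βm1 = ε • αm1 := by
  have hα1 : α1 ≠ 0 := by simpa using hli.ne_zero 0
  have hαm1 : αm1 ≠ 0 := by simpa using hli.ne_zero 2
  obtain ⟨s, t, hst, rfl, rfl⟩ := exists_smul_smul_of_vecMulVec_eq h2 hα1 hαm1
  have hsplit : vecMulVec α1 (α0 - s • β0) = vecMulVec (t • β0 - α0) αm1 := by
    simp only [vecMulVec_sub, sub_vecMulVec, vecMulVec_smul, smul_vecMulVec] at h1 ⊢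
    rw [sub_eq_sub_iff_add_eq_add, h1, add_comm]
  obtain ⟨p, hp⟩ := exists_smul_eq_right_of_vecMulVec_eq hsplit.symm hα1
  obtain ⟨q, hq⟩ := exists_smul_eq_left_of_vecMulVec_eq hsplit hαm1
  have hrel : (-(s * s * q)) • α1 + (1 - s * s) • α0 + (-p) • αm1 = 0 := by
    linear_combination (norm := module) hp + (s * s) • hq - hst • (s • β0)
  obtain ⟨-, hs2, hp0⟩ := hli.eq_zero_of_triple hrel
  have hss : s * s = 1 := by linear_combination -hs2
  have hts : t = s := by linear_combination s * hst - t * hss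
  have hβ0 : β0 = s • α0 := by
    rw [neg_eq_zero.mp hp0, zero_smul, sub_eq_zero] at hp
    rw [hp, smul_smul, hss, one_smul]
  exact ⟨s, mul_self_eq_one_iff.mp hss, rfl, hβ0, by rw [hts]⟩

/-- identification of the loading vectors in the case `ρ = 0`: if two
linearly independent triples produce the same matrices `α₁ α₋₁ᵀ` and
`α₁ α₀ᵀ + α₀ α₋₁ᵀ`, they coincide up to a common sign. -/
theorem stmt_6 {K : ℕ} (hK : 1 ≤ K)
    (α1 α0 αm1 β1 β0 βm1 : Fin K → ℝ)
    (hli : LinearIndependent ℝ ![α1, α0, αm1])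
    (hli' : LinearIndependent ℝ ![β1, β0, βm1])
    (h2 : vecMulVec α1 αm1 = vecMulVec β1 βm1)
    (h1 : vecMulVec α1 α0 + vecMulVec α0 αm1 = vecMulVec β1 β0 + vecMulVec β0 βm1) :
    ∃ ε : ℝ, (ε = 1 ∨ ε = -1) ∧ β1 = ε • α1 ∧ β0 = ε • α0 ∧ βm1 = ε • αm1 :=
  stmt_6_general α1 α0 αm1 β1 β0 βm1 hli h2 h1
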